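/- arXiv:2305.06664 — 3 statements merged into one kernel-verified Lean document; each statement's English description precedes it below -/
import Mathlib

section
/- Let X be a contractible object of C₂(P), i.e. 1_X ∼ 0. Then there exist finitely generated projective right A-modules P and Q, unique up to isomorphism of A-modules, such that X ≅ K_P ⊕ K_Q^* in C₂(P). -/
open CategoryTheory

universe u

noncomputable section

variable (R : Type u) [Ring R]

structure TwoCx : Type (u + 1) where
  X1 : ModuleCat.{u} R
  X0 : ModuleCat.{u} R
  fin1 : Module.Finite R X1
  proj1 : Module.Projective R X1
  fin0 : Module.Finite R X0
  proj0 : Module.Projective R X0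
  d1 : X1 ⟶ X0
  d0 : X0 ⟶ X1
  dd1 : d1 ≫ d0 = 0
  dd0 : d0 ≫ d1 = 0

variable {R}

@[ext]
structure TwoHom (X Y : TwoCx R) : Type u where
  f1 : X.X1 ⟶ Y.X1
  f0 : X.X0 ⟶ Y.X0
  comm1 : X.d1 ≫ f0 = f1 ≫ Y.d1
  comm0 : X.d0 ≫ f1 = f0 ≫ Y.d0

instance : CategoryStruct (TwoCx R) where
  Hom := TwoHom
  id X := ⟨𝟙 X.X1, 𝟙 X.X0, by simp, by simp⟩
  comp {X Y Z} f g :=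
    ⟨f.f1 ≫ g.f1, f.f0 ≫ g.f0, by
      rw [← Category.assoc, f.comm1, Category.assoc, g.comm1, ← Category.assoc], by
      rw [← Category.assoc, f.comm0, Category.assoc, g.comm0, ← Category.assoc]⟩

@[simp] theorem id_f1 (X : TwoCx R) : TwoHom.f1 (𝟙 X) = 𝟙 X.X1 := rfl
@[simp] theorem id_f0 (X : TwoCx R) : TwoHom.f0 (𝟙 X) = 𝟙 X.X0 := rfl
@[simp] theorem comp_f1 {X Y Z : TwoCx R} (f : X ⟶ Y) (g : Y ⟶ Z) :
    TwoHom.f1 (f ≫ g) = TwoHom.f1 f ≫ TwoHom.f1 g := rfl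
@[simp] theorem comp_f0 {X Y Z : TwoCx R} (f : X ⟶ Y) (g : Y ⟶ Z) :
    TwoHom.f0 (f ≫ g) = TwoHom.f0 f ≫ TwoHom.f0 g := rfl

@[ext] theorem hom_ext {X Y : TwoCx R} {f g : X ⟶ Y}
    (h1 : TwoHom.f1 f = TwoHom.f1 g) (h0 : TwoHom.f0 f = TwoHom.f0 g) : f = g :=
  TwoHom.ext h1 h0

instance : Category (TwoCx R) where
  id_comp f := by ext <;> simp
  comp_id f := by ext <;> simp
  assoc f g h := by ext <;> simp

section HomGroup

variable {X Y : TwoCx R}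

instance : Zero (X ⟶ Y) :=
  ⟨TwoHom.mk 0 0 (by simp) (by simp)⟩

@[simp] theorem zero_f1 : TwoHom.f1 (0 : X ⟶ Y) = 0 := rfl
@[simp] theorem zero_f0 : TwoHom.f0 (0 : X ⟶ Y) = 0 := rfl

instance : Add (X ⟶ Y) :=
  ⟨fun f g => TwoHom.mk (f.f1 + g.f1) (f.f0 + g.f0)
    (by rw [Preadditive.comp_add, f.comm1, g.comm1, ← Preadditive.add_comp])
    (by rw [Preadditive.comp_add, f.comm0, g.comm0, ← Preadditive.add_comp])⟩

@[simp] theorem add_f1 (f g : X ⟶ Y) :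
    TwoHom.f1 (f + g) = TwoHom.f1 f + TwoHom.f1 g := rfl
@[simp] theorem add_f0 (f g : X ⟶ Y) :
    TwoHom.f0 (f + g) = TwoHom.f0 f + TwoHom.f0 g := rfl

instance : Neg (X ⟶ Y) :=
  ⟨fun f => TwoHom.mk (-f.f1) (-f.f0)
    (by rw [Preadditive.comp_neg, f.comm1, ← Preadditive.neg_comp])
    (by rw [Preadditive.comp_neg, f.comm0, ← Preadditive.neg_comp])⟩

@[simp] theorem neg_f1 (f : X ⟶ Y) : TwoHom.f1 (-f) = -TwoHom.f1 f := rfl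
@[simp] theorem neg_f0 (f : X ⟶ Y) : TwoHom.f0 (-f) = -TwoHom.f0 f := rfl

instance : AddCommGroup (X ⟶ Y) where
  add := (· + ·)
  zero := 0
  neg := Neg.neg
  add_assoc a b c := by ext <;> simp [add_assoc]
  zero_add a := by ext <;> simp
  add_zero a := by ext <;> simp
  add_comm a b := by ext <;> simp [add_comm]
  neg_add_cancel a := by ext <;> simp
  nsmul := nsmulRec
  zsmul := zsmulRec

@[simp] theorem sub_f1 (f g : X ⟶ Y) :
    TwoHom.f1 (f - g) = TwoHom.f1 f - TwoHom.f1 g := by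
  show TwoHom.f1 (f + -g) = _
  rw [add_f1, neg_f1, sub_eq_add_neg]

@[simp] theorem sub_f0 (f g : X ⟶ Y) :
    TwoHom.f0 (f - g) = TwoHom.f0 f - TwoHom.f0 g := by
  show TwoHom.f0 (f + -g) = _
  rw [add_f0, neg_f0, sub_eq_add_neg]

end HomGroup

instance : Preadditive (TwoCx R) where
  add_comp := by intros; ext <;> simp
  comp_add := by intros; ext <;> simp

def Homotopic {X Y : TwoCx R} (f g : X ⟶ Y) : Prop :=
  ∃ (h1 : X.X1 ⟶ Y.X0) (h0 : X.X0 ⟶ Y.X1),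
    TwoHom.f1 f - TwoHom.f1 g = h1 ≫ Y.d0 + X.d1 ≫ h0 ∧
    TwoHom.f0 f - TwoHom.f0 g = h0 ≫ Y.d1 + X.d0 ≫ h1

def Contractible (X : TwoCx R) : Prop := Homotopic (𝟙 X) (0 : X ⟶ X)

def IsHtpEquiv {X Y : TwoCx R} (f : X ⟶ Y) : Prop :=
  ∃ g : Y ⟶ X, Homotopic (f ≫ g) (𝟙 X) ∧ Homotopic (g ≫ f) (𝟙 Y)

def HtpEquiv (X Y : TwoCx R) : Prop := ∃ f : X ⟶ Y, IsHtpEquiv f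

def modRad (M : ModuleCat.{u} R) : Submodule R M :=
  sInf {N : Submodule R M | IsCoatom N}

def RadicalCx (X : TwoCx R) : Prop :=
  LinearMap.range X.d1.hom ≤ modRad X.X0 ∧ LinearMap.range X.d0.hom ≤ modRad X.X1

def dsum (X Y : TwoCx R) : TwoCx R where
  X1 := ModuleCat.of R (X.X1 × Y.X1)
  X0 := ModuleCat.of R (X.X0 × Y.X0)
  fin1 := by haveI := X.fin1; haveI := Y.fin1; exact (inferInstance : Module.Finite R (X.X1 × Y.X1))
  proj1 := by haveI := X.proj1; haveI := Y.proj1; exact (inferInstance : Module.Projective R (X.X1 × Y.X1))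
  fin0 := by haveI := X.fin0; haveI := Y.fin0; exact (inferInstance : Module.Finite R (X.X0 × Y.X0))
  proj0 := by haveI := X.proj0; haveI := Y.proj0; exact (inferInstance : Module.Projective R (X.X0 × Y.X0))
  d1 := ModuleCat.ofHom (LinearMap.prodMap X.d1.hom Y.d1.hom)
  d0 := ModuleCat.ofHom (LinearMap.prodMap X.d0.hom Y.d0.hom)
  dd1 := by
    have h1 : LinearMap.comp X.d0.hom X.d1.hom = 0 := by
      rw [← ModuleCat.hom_comp, X.dd1, ModuleCat.hom_zero]
    have h2 : LinearMap.comp Y.d0.hom Y.d1.hom = 0 := by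
      rw [← ModuleCat.hom_comp, Y.dd1, ModuleCat.hom_zero]
    apply ModuleCat.hom_ext
    rw [ModuleCat.hom_comp, ModuleCat.hom_ofHom, ModuleCat.hom_ofHom, ModuleCat.hom_zero,
      LinearMap.prodMap_comp, h1, h2, LinearMap.prodMap_zero]
  dd0 := by
    have h1 : LinearMap.comp X.d1.hom X.d0.hom = 0 := by
      rw [← ModuleCat.hom_comp, X.dd0, ModuleCat.hom_zero]
    have h2 : LinearMap.comp Y.d1.hom Y.d0.hom = 0 := by
      rw [← ModuleCat.hom_comp, Y.dd0, ModuleCat.hom_zero]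
    apply ModuleCat.hom_ext
    rw [ModuleCat.hom_comp, ModuleCat.hom_ofHom, ModuleCat.hom_ofHom, ModuleCat.hom_zero,
      LinearMap.prodMap_comp, h1, h2, LinearMap.prodMap_zero]

def kP (P : ModuleCat.{u} R) (h1 : Module.Finite R P) (h2 : Module.Projective R P) : TwoCx R :=
  ⟨P, P, h1, h2, h1, h2, 𝟙 P, 0, by simp, by simp⟩

def kS (P : ModuleCat.{u} R) (h1 : Module.Finite R P) (h2 : Module.Projective R P) : TwoCx R :=
  ⟨P, P, h1, h2, h1, h2, 0, 𝟙 P, by simp, by simp⟩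

def starCx (X : TwoCx R) : TwoCx R :=
  ⟨X.X0, X.X1, X.fin0, X.proj0, X.fin1, X.proj1, -X.d0, -X.d1,
    by simp [X.dd0], by simp [X.dd1]⟩

-- ## The homotopy category
variable (R) in
def htpRel : HomRel (TwoCx R) := fun _ _ f g => Homotopic f g

abbrev KTwo (R : Type u) [Ring R] := CategoryTheory.Quotient (htpRel R)

def KFun (R : Type u) [Ring R] : TwoCx R ⥤ KTwo R := Quotient.functor _

-- ## Short exact sequences
structure SESData (Y Z X : TwoCx R) where
  a : Y ⟶ Z
  b : Z ⟶ X
  inj1 : Function.Injective (TwoHom.f1 a)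
  inj0 : Function.Injective (TwoHom.f0 a)
  surj1 : Function.Surjective (TwoHom.f1 b)
  surj0 : Function.Surjective (TwoHom.f0 b)
  exact1 : LinearMap.range (TwoHom.f1 a).hom = LinearMap.ker (TwoHom.f1 b).hom
  exact0 : LinearMap.range (TwoHom.f0 a).hom = LinearMap.ker (TwoHom.f0 b).hom

def SESEquiv {Y X Z Z' : TwoCx R} (s : SESData Y Z X) (t : SESData Y Z' X) : Prop :=
  ∃ e : Z ≅ Z', s.a ≫ e.hom = t.a ∧ e.hom ≫ t.b = s.b

/-- The two components of a morphism `X ⟶ Y^*`, with their natural types. -/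
def sf1 {X Y : TwoCx R} (f : X ⟶ starCx Y) : X.X1 →ₗ[R] Y.X0 := (TwoHom.f1 f).hom
def sf0 {X Y : TwoCx R} (f : X ⟶ starCx Y) : X.X0 →ₗ[R] Y.X1 := (TwoHom.f0 f).hom

-- ## The middle term associated to `f : X ⟶ Y^*`
def coneCx {X Y : TwoCx R} (f : X ⟶ starCx Y) : TwoCx R where
  X1 := ModuleCat.of R (X.X1 × Y.X1)
  X0 := ModuleCat.of R (X.X0 × Y.X0)
  fin1 := by haveI := X.fin1; haveI := Y.fin1; exact (inferInstance : Module.Finite R (X.X1 × Y.X1))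
  proj1 := by haveI := X.proj1; haveI := Y.proj1; exact (inferInstance : Module.Projective R (X.X1 × Y.X1))
  fin0 := by haveI := X.fin0; haveI := Y.fin0; exact (inferInstance : Module.Finite R (X.X0 × Y.X0))
  proj0 := by haveI := X.proj0; haveI := Y.proj0; exact (inferInstance : Module.Projective R (X.X0 × Y.X0))
  d1 := ModuleCat.ofHom (LinearMap.prod (X.d1.hom ∘ₗ LinearMap.fst R X.X1 Y.X1)
    (Y.d1.hom ∘ₗ LinearMap.snd R X.X1 Y.X1 - sf1 f ∘ₗ LinearMap.fst R X.X1 Y.X1))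
  d0 := ModuleCat.ofHom (LinearMap.prod (X.d0.hom ∘ₗ LinearMap.fst R X.X0 Y.X0)
    (Y.d0.hom ∘ₗ LinearMap.snd R X.X0 Y.X0 - sf0 f ∘ₗ LinearMap.fst R X.X0 Y.X0))
  dd1 := by
    refine ModuleCat.hom_ext (LinearMap.ext fun p => Prod.ext ?_ ?_)
    · show X.d0.hom (X.d1.hom p.1) = 0
      exact LinearMap.congr_fun (congrArg ModuleCat.Hom.hom X.dd1) p.1
    · show Y.d0.hom (Y.d1.hom p.2 - sf1 f p.1) - sf0 f (X.d1.hom p.1) = 0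
      have hY : Y.d0.hom (Y.d1.hom p.2) = 0 :=
        LinearMap.congr_fun (congrArg ModuleCat.Hom.hom Y.dd1) p.2
      have hc : sf0 f (X.d1.hom p.1) = -(Y.d0.hom (sf1 f p.1)) :=
        LinearMap.congr_fun (congrArg ModuleCat.Hom.hom f.comm1) p.1
      rw [map_sub, hY, hc]
      simp
  dd0 := by
    refine ModuleCat.hom_ext (LinearMap.ext fun p => Prod.ext ?_ ?_)
    · show X.d1.hom (X.d0.hom p.1) = 0
      exact LinearMap.congr_fun (congrArg ModuleCat.Hom.hom X.dd0) p.1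
    · show Y.d1.hom (Y.d0.hom p.2 - sf0 f p.1) - sf1 f (X.d0.hom p.1) = 0
      have hY : Y.d1.hom (Y.d0.hom p.2) = 0 :=
        LinearMap.congr_fun (congrArg ModuleCat.Hom.hom Y.dd0) p.2
      have hc : sf1 f (X.d0.hom p.1) = -(Y.d1.hom (sf0 f p.1)) :=
        LinearMap.congr_fun (congrArg ModuleCat.Hom.hom f.comm0) p.1
      rw [map_sub, hY, hc]
      simp

/-- The canonical inclusion `Y ⟶ Z_f`. -/
def coneIn {X Y : TwoCx R} (f : X ⟶ starCx Y) : Y ⟶ coneCx f where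
  f1 := ModuleCat.ofHom (LinearMap.inr R X.X1 Y.X1)
  f0 := ModuleCat.ofHom (LinearMap.inr R X.X0 Y.X0)
  comm1 := by
    refine ModuleCat.hom_ext (LinearMap.ext fun y => Prod.ext ?_ ?_)
    · show (0 : X.X0) = X.d1.hom 0
      simp
    · show Y.d1.hom y = Y.d1.hom y - sf1 f 0
      simp
  comm0 := by
    refine ModuleCat.hom_ext (LinearMap.ext fun y => Prod.ext ?_ ?_)
    · show (0 : X.X1) = X.d0.hom 0
      simp
    · show Y.d0.hom y = Y.d0.hom y - sf0 f 0
      simp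

/-- The canonical projection `Z_f ⟶ X`. -/
def coneOut {X Y : TwoCx R} (f : X ⟶ starCx Y) : coneCx f ⟶ X where
  f1 := ModuleCat.ofHom (LinearMap.fst R X.X1 Y.X1)
  f0 := ModuleCat.ofHom (LinearMap.fst R X.X0 Y.X0)
  comm1 := ModuleCat.hom_ext (LinearMap.ext fun _ => rfl)
  comm0 := ModuleCat.hom_ext (LinearMap.ext fun _ => rfl)

/-- The canonical short exact sequence `0 ⟶ Y ⟶ Z_f ⟶ X ⟶ 0`. -/
def canonSES {X Y : TwoCx R} (f : X ⟶ starCx Y) : SESData Y (coneCx f) X where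
  a := coneIn f
  b := coneOut f
  inj1 := LinearMap.inr_injective
  inj0 := LinearMap.inr_injective
  surj1 := LinearMap.fst_surjective
  surj0 := LinearMap.fst_surjective
  exact1 := LinearMap.range_inr R X.X1 Y.X1
  exact0 := LinearMap.range_inr R X.X0 Y.X0

-- ## scalar endomorphisms
def scalarMod [Algebra ℂ R] (c : ℂ) (M : ModuleCat.{u} R) : M ⟶ M :=
  ModuleCat.ofHom ({ toFun := fun m => algebraMap ℂ R c • m
                     map_add' := fun x y => smul_add _ x y
                     map_smul' := fun r m => by
                       simp only [RingHom.id_apply, smul_smul, Algebra.commutes] } : M →ₗ[R] M)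

def scalarHom [Algebra ℂ R] (c : ℂ) (X : TwoCx R) : X ⟶ X where
  f1 := scalarMod c X.X1
  f0 := scalarMod c X.X0
  comm1 := by
    refine ModuleCat.hom_ext (LinearMap.ext fun x => ?_)
    exact (map_smul X.d1.hom (algebraMap ℂ R c) x).symm
  comm0 := by
    refine ModuleCat.hom_ext (LinearMap.ext fun x => ?_)
    exact (map_smul X.d0.hom (algebraMap ℂ R c) x).symm

end

/-!
A null-homotopy `(h¹, h⁰)` of `1_X` splits both terms of `X`: `x ↦ (d¹x, d⁰h¹x)` identifies `X¹`
with `im d¹ × im d⁰`, and `y ↦ (d¹h⁰y, d⁰y)` identifies `X⁰` with the same product, turning `d¹`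
and `d⁰` into the two projections. Hence `X ≅ K_P ⊕ K_Q^*` with `P = im d¹` and `Q = im d⁰`, each a
retract of a term of `X`. Conversely, `P` and `Q` are recovered from any such decomposition as the
cokernels of `d⁰` and `d¹`, which an isomorphism of complexes preserves.
-/

section Contraction

variable {R M N : Type*} [Ring R] [AddCommGroup M] [AddCommGroup N] [Module R M] [Module R N]

-- `(M, N, d, d')` is a two-periodic complex and `(h, h')` a null-homotopy of its identity.
structure IsLinearContraction (d : M →ₗ[R] N) (d' : N →ₗ[R] M) (h : M →ₗ[R] N) (h' : N →ₗ[R] M) :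
    Prop where
  d'_d : ∀ x, d' (d x) = 0
  d_d' : ∀ y, d (d' y) = 0
  d'_h_add_h'_d : ∀ x, d' (h x) + h' (d x) = x
  d_h'_add_h_d' : ∀ y, d (h' y) + h (d' y) = y

namespace IsLinearContraction

variable {d : M →ₗ[R] N} {d' : N →ₗ[R] M} {h : M →ₗ[R] N} {h' : N →ₗ[R] M}

theorem symm (c : IsLinearContraction d d' h h') : IsLinearContraction d' d h' h :=
  ⟨c.d_d', c.d'_d, c.d_h'_add_h_d', c.d'_h_add_h'_d⟩

theorem d_h'_d (c : IsLinearContraction d d' h h') (x : M) : d (h' (d x)) = d x := by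
  simpa [c.d'_d] using c.d_h'_add_h_d' (d x)

theorem d'_h_h'_d (c : IsLinearContraction d d' h h') (x : M) : d' (h (h' (d x))) = 0 := by
  have hx : h' (d x) = x - d' (h x) := eq_sub_of_add_eq' (c.d'_h_add_h'_d x)
  rw [hx, map_sub, map_sub, c.symm.d_h'_d, sub_self]

theorem projective_range [Module.Projective R M] (c : IsLinearContraction d d' h h') :
    Module.Projective R (LinearMap.range d) :=
  .of_split (h' ∘ₗ (LinearMap.range d).subtype) d.rangeRestrict <| by
    ext ⟨_, x, rfl⟩
    exact c.d_h'_d x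

def equivRangeProd (c : IsLinearContraction d d' h h') :
    M ≃ₗ[R] LinearMap.range d × LinearMap.range d' :=
  .ofLinearMap (d.rangeRestrict.prod (d'.rangeRestrict ∘ₗ h))
    ((h' ∘ₗ (LinearMap.range d).subtype).coprod (LinearMap.range d').subtype)
    (by
      ext ⟨_, x, rfl⟩ <;> simp [c.d_h'_d, c.d'_h_h'_d, c.d_d', c.symm.d_h'_d])
    (by
      ext x
      simp [add_comm (h' (d x)), c.d'_h_add_h'_d])

@[simp]
theorem equivRangeProd_apply (c : IsLinearContraction d d' h h') (x : M) :
    c.equivRangeProd x = (d.rangeRestrict x, d'.rangeRestrict (h x)) :=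
  rfl

theorem symm_equivRangeProd_apply_d (c : IsLinearContraction d d' h h') (x : M) :
    c.symm.equivRangeProd (d x) = (0, d.rangeRestrict x) := by
  ext
  · simp [c.d'_d]
  · simp [c.d_h'_d]

end IsLinearContraction

end Contraction

section TwoPeriodic

variable {R : Type u} [Ring R]

theorem isLinearContraction_of_contractible {X : TwoCx R} (hX : Contractible X) :
    ∃ (h1 : X.X1 →ₗ[R] X.X0) (h0 : X.X0 →ₗ[R] X.X1),
      IsLinearContraction X.d1.hom X.d0.hom h1 h0 := by
  obtain ⟨h1, h0, e1, e0⟩ := hX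
  refine ⟨h1.hom, h0.hom, fun x => ?_, fun y => ?_, fun x => ?_, fun y => ?_⟩
  · simpa using congr(($X.dd1).hom x)
  · simpa using congr(($X.dd0).hom y)
  · simpa using congr(($e1).hom x).symm
  · simpa using congr(($e0).hom y).symm

def isoOfLinearEquiv {X Y : TwoCx R} (e1 : X.X1 ≃ₗ[R] Y.X1) (e0 : X.X0 ≃ₗ[R] Y.X0)
    (comm1 : ∀ x, e0 (X.d1.hom x) = Y.d1.hom (e1 x))
    (comm0 : ∀ y, e1 (X.d0.hom y) = Y.d0.hom (e0 y)) : X ≅ Y where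
  hom := ⟨ModuleCat.ofHom e1, ModuleCat.ofHom e0, by ext x; exact comm1 x, by ext y; exact comm0 y⟩
  inv := ⟨ModuleCat.ofHom e1.symm, ModuleCat.ofHom e0.symm,
    by ext y; apply e0.injective; simp [comm1], by ext y; apply e1.injective; simp [comm0]⟩
  hom_inv_id := by ext <;> simp
  inv_hom_id := by ext <;> simp

theorem exists_iso_dsum_of_contractible (X : TwoCx R) (hX : Contractible X) :
    ∃ (P Q : ModuleCat.{u} R) (hPf : Module.Finite R P) (hPp : Module.Projective R P)
      (hQf : Module.Finite R Q) (hQp : Module.Projective R Q),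
      Nonempty (X ≅ dsum (kP P hPf hPp) (kS Q hQf hQp)) := by
  obtain ⟨h1, h0, c⟩ := isLinearContraction_of_contractible hX
  have := X.fin1; have := X.proj1; have := X.fin0; have := X.proj0
  refine ⟨.of R (LinearMap.range X.d1.hom), .of R (LinearMap.range X.d0.hom),
    Module.Finite.range _, c.projective_range, Module.Finite.range _, c.symm.projective_range,
    ⟨isoOfLinearEquiv c.equivRangeProd (c.symm.equivRangeProd ≪≫ₗ LinearEquiv.prodComm R _ _)
      (fun x => ?_) (fun y => ?_)⟩⟩
  · exact congrArg Prod.swap (c.symm_equivRangeProd_apply_d x)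
  · exact c.symm.symm_equivRangeProd_apply_d y

end TwoPeriodic

section Cokernel

variable {R M M' N N' : Type*} [Ring R] [AddCommGroup M] [AddCommGroup M'] [AddCommGroup N]
  [AddCommGroup N'] [Module R M] [Module R M'] [Module R N] [Module R N']

noncomputable def quotRangeEquiv {d : N →ₗ[R] M} {d' : N' →ₗ[R] M'}
    (eM : M ≃ₗ[R] M') (eN : N ≃ₗ[R] N')
    (comm : ∀ y, eM (d y) = d' (eN y)) :
    (M ⧸ LinearMap.range d) ≃ₗ[R] M' ⧸ LinearMap.range d' :=
  Submodule.Quotient.equiv _ _ eM <| by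
    have h : eM.toLinearMap ∘ₗ d = d' ∘ₗ eN.toLinearMap := LinearMap.ext comm
    rw [← LinearMap.range_comp, h, LinearMap.range_comp_of_range_eq_top _ eN.range]

variable (R M N) in
noncomputable def quotRangeZeroProdMapIdEquiv :
    ((M × N) ⧸ LinearMap.range ((0 : M →ₗ[R] M).prodMap (LinearMap.id : N →ₗ[R] N))) ≃ₗ[R] M :=
  .trans (Submodule.quotEquivOfEq _ _ (by ext; simp)) <|
    (LinearMap.fst R M N).quotKerEquivOfSurjective LinearMap.fst_surjective

variable (R M N) in
noncomputable def quotRangeIdProdMapZeroEquiv :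
    ((M × N) ⧸ LinearMap.range ((LinearMap.id : M →ₗ[R] M).prodMap (0 : N →ₗ[R] N))) ≃ₗ[R] N :=
  .trans (Submodule.quotEquivOfEq _ _ (by ext; simp)) <|
    (LinearMap.snd R M N).quotKerEquivOfSurjective LinearMap.snd_surjective

end Cokernel

section Uniqueness

variable {R : Type u} [Ring R]

variable (R) in
def degreeOneFunctor : TwoCx R ⥤ ModuleCat.{u} R where
  obj := TwoCx.X1
  map := TwoHom.f1

variable (R) in
def degreeZeroFunctor : TwoCx R ⥤ ModuleCat.{u} R where
  obj := TwoCx.X0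
  map := TwoHom.f0

noncomputable def cokerD0EquivOfIso {X Y : TwoCx R} (e : X ≅ Y) :
    (X.X1 ⧸ LinearMap.range X.d0.hom) ≃ₗ[R] Y.X1 ⧸ LinearMap.range Y.d0.hom :=
  quotRangeEquiv ((degreeOneFunctor R).mapIso e).toLinearEquiv
    ((degreeZeroFunctor R).mapIso e).toLinearEquiv fun y => congr(($e.hom.comm0).hom y)

noncomputable def cokerD1EquivOfIso {X Y : TwoCx R} (e : X ≅ Y) :
    (X.X0 ⧸ LinearMap.range X.d1.hom) ≃ₗ[R] Y.X0 ⧸ LinearMap.range Y.d1.hom :=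
  quotRangeEquiv ((degreeZeroFunctor R).mapIso e).toLinearEquiv
    ((degreeOneFunctor R).mapIso e).toLinearEquiv fun x => congr(($e.hom.comm1).hom x)

theorem nonempty_linearEquiv_of_iso_dsum {P Q P' Q' : ModuleCat.{u} R}
    {hPf : Module.Finite R P} {hPp : Module.Projective R P}
    {hQf : Module.Finite R Q} {hQp : Module.Projective R Q}
    {hPf' : Module.Finite R P'} {hPp' : Module.Projective R P'}
    {hQf' : Module.Finite R Q'} {hQp' : Module.Projective R Q'}
    (e : dsum (kP P hPf hPp) (kS Q hQf hQp) ≅ dsum (kP P' hPf' hPp') (kS Q' hQf' hQp')) :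
    Nonempty (P ≃ₗ[R] P') ∧ Nonempty (Q ≃ₗ[R] Q') :=
  ⟨⟨(quotRangeZeroProdMapIdEquiv R P Q).symm ≪≫ₗ cokerD0EquivOfIso e ≪≫ₗ
      quotRangeZeroProdMapIdEquiv R P' Q'⟩,
    ⟨(quotRangeIdProdMapZeroEquiv R P Q).symm ≪≫ₗ cokerD1EquivOfIso e ≪≫ₗ
      quotRangeIdProdMapZeroEquiv R P' Q'⟩⟩

end Uniqueness

theorem statement_0_general {A : Type u} [Ring A]
    (X : TwoCx Aᵐᵒᵖ) (hX : Contractible X) :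
    (∃ (P Q : ModuleCat.{u} Aᵐᵒᵖ) (hPf : Module.Finite Aᵐᵒᵖ P) (hPp : Module.Projective Aᵐᵒᵖ P)
        (hQf : Module.Finite Aᵐᵒᵖ Q) (hQp : Module.Projective Aᵐᵒᵖ Q),
        Nonempty (X ≅ dsum (kP P hPf hPp) (kS Q hQf hQp))) ∧
    (∀ (P Q P' Q' : ModuleCat.{u} Aᵐᵒᵖ)
        (hPf : Module.Finite Aᵐᵒᵖ P) (hPp : Module.Projective Aᵐᵒᵖ P)
        (hQf : Module.Finite Aᵐᵒᵖ Q) (hQp : Module.Projective Aᵐᵒᵖ Q)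
        (hPf' : Module.Finite Aᵐᵒᵖ P') (hPp' : Module.Projective Aᵐᵒᵖ P')
        (hQf' : Module.Finite Aᵐᵒᵖ Q') (hQp' : Module.Projective Aᵐᵒᵖ Q'),
        Nonempty (X ≅ dsum (kP P hPf hPp) (kS Q hQf hQp)) →
        Nonempty (X ≅ dsum (kP P' hPf' hPp') (kS Q' hQf' hQp')) →
        Nonempty (P ≃ₗ[Aᵐᵒᵖ] P') ∧ Nonempty (Q ≃ₗ[Aᵐᵒᵖ] Q')) := by
  refine ⟨exists_iso_dsum_of_contractible X hX, ?_⟩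
  rintro P Q P' Q' hPf hPp hQf hQp hPf' hPp' hQf' hQp' ⟨i⟩ ⟨i'⟩
  exact nonempty_linearEquiv_of_iso_dsum (i.symm ≪≫ i')

/-- If `X` is a contractible object of `C₂(P)` then there are finitely
generated projective right `A`-modules `P`, `Q`, unique up to isomorphism of `A`-modules,
with `X ≅ K_P ⊕ K_Q^*` in `C₂(P)`. (Right `A`-modules are modules over `Aᵐᵒᵖ`.) -/
theorem statement_0 {A : Type u} [Ring A] [Algebra ℂ A] [FiniteDimensional ℂ A]
    (X : TwoCx Aᵐᵒᵖ) (hX : Contractible X) :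
    (∃ (P Q : ModuleCat.{u} Aᵐᵒᵖ) (hPf : Module.Finite Aᵐᵒᵖ P) (hPp : Module.Projective Aᵐᵒᵖ P)
        (hQf : Module.Finite Aᵐᵒᵖ Q) (hQp : Module.Projective Aᵐᵒᵖ Q),
        Nonempty (X ≅ dsum (kP P hPf hPp) (kS Q hQf hQp))) ∧
    (∀ (P Q P' Q' : ModuleCat.{u} Aᵐᵒᵖ)
        (hPf : Module.Finite Aᵐᵒᵖ P) (hPp : Module.Projective Aᵐᵒᵖ P)
        (hQf : Module.Finite Aᵐᵒᵖ Q) (hQp : Module.Projective Aᵐᵒᵖ Q)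
        (hPf' : Module.Finite Aᵐᵒᵖ P') (hPp' : Module.Projective Aᵐᵒᵖ P')
        (hQf' : Module.Finite Aᵐᵒᵖ Q') (hQp' : Module.Projective Aᵐᵒᵖ Q'),
        Nonempty (X ≅ dsum (kP P hPf hPp) (kS Q hQf hQp)) →
        Nonempty (X ≅ dsum (kP P' hPf' hPp') (kS Q' hQf' hQp')) →
        Nonempty (P ≃ₗ[Aᵐᵒᵖ] P') ∧ Nonempty (Q ≃ₗ[Aᵐᵒᵖ] Q')) :=
  statement_0_general X hX
end

section
/- Let T be a ℂ-linear pretriangulated category with shift ⟦1⟧, let Z be an object with End_T(Z) a local ring, and let Y →f→ Z →g→ X →h→ Y⟦1⟧ be a distinguished triangle. Then the set S = {γ − 1_Z | γ ∈ Aut_T(Z), γ ∘ f = f, g ∘ γ = g} is a ℂ-linear subspace of End_T(Z). -/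
open CategoryTheory CategoryTheory.Limits CategoryTheory.Pretriangulated

universe v u

/-!
The set in question is exactly the space of endomorphisms `u` of `Z` with `f ≫ u = 0` and
`u ≫ g = 0`, which is visibly a subspace. Indeed `γ ↦ γ - 𝟙 Z` sends such automorphisms into this
space; conversely, `u ≫ g = 0` makes `u` factor through `f`, so `u ≫ u = 0`, and then `𝟙 Z + u`
is an automorphism with inverse `𝟙 Z - u`.
-/

namespace CategoryTheory

section Preadditive

variable {C : Type u} [Category.{v} C] [Preadditive C]

@[simps hom]
def Preadditive.autOneAddOfCompSelfEqZero {Z : C} (u : Z ⟶ Z) (hu : u ≫ u = 0) : Aut Z where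
  hom := 𝟙 Z + u
  inv := 𝟙 Z - u
  hom_inv_id := by simp [Preadditive.comp_sub, Preadditive.add_comp, hu]
  inv_hom_id := by simp [Preadditive.comp_add, Preadditive.sub_comp, hu]

end Preadditive

section Linear

variable (R : Type*) [Semiring R] {C : Type u} [Category.{v} C] [Preadditive C] [Linear R C]

def Linear.twoSidedAnnihilator {X Y Z : C} (f : Y ⟶ Z) (g : Z ⟶ X) : Submodule R (Z ⟶ Z) :=
  LinearMap.ker (Linear.leftComp R Z f) ⊓ LinearMap.ker (Linear.rightComp R Z g)

variable {R}

theorem Linear.mem_twoSidedAnnihilator {X Y Z : C} {f : Y ⟶ Z} {g : Z ⟶ X} {u : Z ⟶ Z} :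
    u ∈ twoSidedAnnihilator R f g ↔ f ≫ u = 0 ∧ u ≫ g = 0 :=
  Iff.rfl

end Linear

namespace Pretriangulated

variable {C : Type u} [Category.{v} C] [Preadditive C] [HasZeroObject C] [HasShift C ℤ]
  [∀ n : ℤ, (shiftFunctor C n).Additive] [Pretriangulated C]

theorem comp_self_eq_zero_of_mor₁_comp_of_comp_mor₂ {T : Triangle C}
    (hT : T ∈ distTriang C) {u : T.obj₂ ⟶ T.obj₂} (hf : T.mor₁ ≫ u = 0)
    (hg : u ≫ T.mor₂ = 0) : u ≫ u = 0 := by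
  obtain ⟨v, rfl⟩ := Triangle.coyoneda_exact₂ T hT u hg
  rw [Category.assoc, hf, Limits.comp_zero]

theorem mem_twoSidedAnnihilator_iff_exists_aut (R : Type*) [Semiring R] [Linear R C]
    {X Y Z : C} {f : Y ⟶ Z} {g : Z ⟶ X} {h : X ⟶ Y⟦(1 : ℤ)⟧}
    (hT : Triangle.mk f g h ∈ distTriang C) (u : Z ⟶ Z) :
    u ∈ Linear.twoSidedAnnihilator R f g ↔
      ∃ γ : Aut Z, f ≫ γ.hom = f ∧ γ.hom ≫ g = g ∧ u = γ.hom - 𝟙 Z := by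
  rw [Linear.mem_twoSidedAnnihilator]
  constructor
  · rintro ⟨hf, hg⟩
    have hu : u ≫ u = 0 := comp_self_eq_zero_of_mor₁_comp_of_comp_mor₂ hT hf hg
    refine ⟨Preadditive.autOneAddOfCompSelfEqZero u hu, ?_, ?_, ?_⟩ <;>
      simp [Preadditive.comp_add, Preadditive.add_comp, hf, hg]
  · rintro ⟨γ, hf, hg, rfl⟩
    exact ⟨by simp [Preadditive.comp_sub, hf], by simp [Preadditive.sub_comp, hg]⟩

end Pretriangulated

end CategoryTheory

/-- Given a distinguished triangle `Y ⟶ Z ⟶ X ⟶ Y⟦1⟧` in a ℂ-linear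
pretriangulated category with `End Z` local, the set
`{γ − 1_Z | γ ∈ Aut Z, γ∘f = f, g∘γ = g}` is a ℂ-linear subspace of `End Z`. -/
theorem statement_13 {C : Type u} [Category.{v} C] [Preadditive C] [CategoryTheory.Linear ℂ C]
    [HasZeroObject C] [HasShift C ℤ] [∀ n : ℤ, (shiftFunctor C n).Additive] [Pretriangulated C]
    {X Y Z : C} (hZ : IsLocalRing (End Z))
    (f : Y ⟶ Z) (g : Z ⟶ X) (h : X ⟶ (Y⟦(1 : ℤ)⟧))
    (hT : Triangle.mk f g h ∈ distTriang C) :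
    ∃ S : Submodule ℂ (Z ⟶ Z),
      (S : Set (Z ⟶ Z)) =
        {p | ∃ γ : Aut Z, f ≫ γ.hom = f ∧ γ.hom ≫ g = g ∧ p = γ.hom - 𝟙 Z} :=
  ⟨Linear.twoSidedAnnihilator ℂ f g,
    Set.ext (mem_twoSidedAnnihilator_iff_exists_aut ℂ hT)⟩
end

section
/- Let T be a ℂ-linear pretriangulated category with shift ⟦1⟧, and let X and Y be objects with End_T(X) and End_T(Y) local rings and X ≇ Y. Let Y →f→ X ⊕ Y →g→ X →0→ Y⟦1⟧ be a distinguished triangle with zero connecting morphism, and write f = (f₁, f₂)ᵀ (f₁ : Y → X, f₂ : Y → Y) and g = (g₁, g₂) (g₁ : X → X, g₂ : Y → X). Then f₂ and g₁ are isomorphisms and g₁ ∘ f₁ + g₂ ∘ f₂ = 0; consequently the triangle is isomorphic, via the automorphisms g₁⁻¹ of X and f₂ of Y and the identity on X ⊕ Y, to the triangle Y →(θ,1)ᵀ→ X ⊕ Y →(1,−θ)→ X →0→ Y⟦1⟧ with θ = f₁ ∘ f₂⁻¹ ∈ Hom_T(Y, X). -/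
open CategoryTheory CategoryTheory.Limits CategoryTheory.Pretriangulated

universe v u

/-!
Because the connecting morphism vanishes, `f` is a split monomorphism and `g` a split
epimorphism. Expanding `𝟙 Y = f ≫ r` through the biproduct writes `𝟙 Y` as a map factoring
through `X` plus `f₂ ≫ r₂`, so in the local ring `End Y` one of the two is a unit. In the first
case `Y` would be a nonzero retract of `X`; the induced idempotent of the local ring `End X` is
then `1`, so `Y ≅ X`. Hence `f₂ ≫ r₂` is a unit, and since local rings are Dedekind-finite, `f₂`
is an isomorphism. Dually `g₁` is an isomorphism, and the normal form of the triangle follows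
from `f ≫ g = 0` by biproduct algebra.
-/

theorem IsLocalRing.eq_zero_or_eq_one_of_isIdempotentElem {R : Type*} [Ring R] [IsLocalRing R]
    {e : R} (he : IsIdempotentElem e) : e = 0 ∨ e = 1 := by
  have hprod : e * (1 - e) = 0 := by rw [mul_sub, mul_one, he.eq, sub_self]
  rcases isUnit_or_isUnit_of_add_one (add_sub_cancel e 1) with h | h
  · exact Or.inr (sub_eq_zero.1 (h.mul_right_eq_zero.1 hprod)).symm
  · exact Or.inl (h.mul_left_eq_zero.1 hprod)

instance IsLocalRing.isDedekindFiniteMonoid {R : Type*} [Ring R] [IsLocalRing R] :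
    IsDedekindFiniteMonoid R where
  mul_eq_one_symm {a b} hab := by
    have he : IsIdempotentElem (b * a) := by
      rw [IsIdempotentElem, mul_assoc, ← mul_assoc a, hab, one_mul]
    refine (eq_zero_or_eq_one_of_isIdempotentElem he).resolve_left fun h0 => one_ne_zero (α := R) ?_
    calc (1 : R) = a * (b * a) * b := by rw [← mul_assoc, hab, one_mul, hab]
      _ = 0 := by rw [h0, mul_zero, zero_mul]

namespace CategoryTheory

variable {C : Type u} [Category.{v} C] [Preadditive C]

theorem Retract.isIso_i_of_isLocalRing {X Y : C} [IsLocalRing (End Y)] [Nontrivial (End X)]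
    (h : Retract X Y) : IsIso h.i := by
  have he : IsIdempotentElem (End.of (h.r ≫ h.i)) := by
    simp [IsIdempotentElem]
  rcases IsLocalRing.eq_zero_or_eq_one_of_isIdempotentElem he with h0 | h1
  · refine absurd ?_ (one_ne_zero (α := End X))
    calc 𝟙 X = (h.i ≫ h.r) ≫ h.i ≫ h.r := by rw [h.retract, Category.comp_id]
      _ = h.i ≫ End.of (h.r ≫ h.i) ≫ h.r := by simp only [Category.assoc, End.of]
      _ = 0 := by rw [h0, zero_comp, comp_zero]
  · exact ⟨h.r, h.retract, h1⟩

theorem isIso_of_comp_add_comp_eq_id {Z W : C} [IsLocalRing (End Z)] [IsLocalRing (End W)]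
    (hne : IsEmpty (Z ≅ W)) {a₁ : Z ⟶ W} {b₁ : W ⟶ Z} {a₂ b₂ : Z ⟶ Z}
    (h : a₁ ≫ b₁ + a₂ ≫ b₂ = 𝟙 Z) : IsIso a₂ ∧ IsIso b₂ := by
  rcases IsLocalRing.isUnit_or_isUnit_of_add_one (a := End.of (a₁ ≫ b₁)) h with h₁ | h₂
  · have : IsIso (a₁ ≫ b₁) := (isUnit_iff_isIso _).1 h₁
    have := (Retract.mk a₁ (b₁ ≫ inv (a₁ ≫ b₁))
      (by rw [← Category.assoc, IsIso.hom_inv_id])).isIso_i_of_isLocalRing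
    exact hne.elim (asIso a₁)
  · change IsUnit (End.of b₂ * End.of a₂) at h₂
    exact ⟨(isUnit_iff_isIso _).1 (isUnit_of_mul_isUnit_right h₂),
      (isUnit_iff_isIso _).1 (isUnit_of_mul_isUnit_left h₂)⟩

theorem Limits.biprod.comp_eq_add {X Y A B : C} [HasBinaryBiproduct X Y] (p : A ⟶ X ⊞ Y)
    (q : X ⊞ Y ⟶ B) :
    p ≫ q = (p ≫ biprod.fst) ≫ biprod.inl ≫ q + (p ≫ biprod.snd) ≫ biprod.inr ≫ q := by
  conv_lhs => rw [← Category.id_comp q, ← biprod.total]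
  simp only [Preadditive.add_comp, Preadditive.comp_add, Category.assoc]

section LocalSummands

variable {X Y : C} [HasBinaryBiproduct X Y] [IsLocalRing (End X)] [IsLocalRing (End Y)]

theorem isIso_comp_snd_of_isSplitMono (hne : IsEmpty (X ≅ Y)) (f : Y ⟶ X ⊞ Y) [IsSplitMono f] :
    IsIso (f ≫ biprod.snd) :=
  (isIso_of_comp_add_comp_eq_id ⟨fun e => hne.false e.symm⟩
    ((biprod.comp_eq_add f (retraction f)).symm.trans (IsSplitMono.id f))).1

theorem isIso_inl_comp_of_isSplitEpi (hne : IsEmpty (X ≅ Y)) (g : X ⊞ Y ⟶ X) [IsSplitEpi g] :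
    IsIso (biprod.inl ≫ g) :=
  (isIso_of_comp_add_comp_eq_id hne (by rw [add_comm, ← biprod.comp_eq_add, IsSplitEpi.id])).2

end LocalSummands

section NormalForm

variable {X Y : C} [HasBinaryBiproduct X Y] (f : Y ⟶ X ⊞ Y) [IsIso (f ≫ biprod.snd)]

theorem Limits.biprod.eq_comp_lift_of_isIso_comp_snd :
    f = (f ≫ biprod.snd) ≫ biprod.lift (inv (f ≫ biprod.snd) ≫ f ≫ biprod.fst) (𝟙 Y) := by
  ext
  · rw [Category.assoc, biprod.lift_fst, IsIso.hom_inv_id_assoc]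
  · rw [Category.assoc, biprod.lift_snd, Category.comp_id]

theorem Limits.biprod.comp_inv_eq_desc_of_comp_eq_zero (g : X ⊞ Y ⟶ X) [IsIso (biprod.inl ≫ g)]
    (hfg : f ≫ g = 0) :
    g ≫ inv (biprod.inl ≫ g) = biprod.desc (𝟙 X) (-(inv (f ≫ biprod.snd) ≫ f ≫ biprod.fst)) := by
  have hinr : biprod.inr ≫ g = -((inv (f ≫ biprod.snd) ≫ f ≫ biprod.fst) ≫ biprod.inl ≫ g) := by
    refine eq_neg_of_add_eq_zero_right ((cancel_epi (f ≫ biprod.snd)).1 ?_)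
    rw [Preadditive.comp_add, ← Category.assoc (f ≫ _), IsIso.hom_inv_id_assoc,
      ← biprod.comp_eq_add, hfg, comp_zero]
  ext
  · simp only [← Category.assoc, IsIso.hom_inv_id, biprod.inl_desc]
  · simp [reassoc_of% hinr]

end NormalForm

end CategoryTheory

/-- Let `Y ⟶f⟶ X ⊞ Y ⟶g⟶ X ⟶0⟶ Y⟦1⟧` be a distinguished triangle with
`End X`, `End Y` local and `X ≇ Y`. Then `f₂ = snd ∘ f` and `g₁ = g ∘ inl` are isomorphisms,
`g₁∘f₁ + g₂∘f₂ = 0`, and with `θ = f₁ ∘ f₂⁻¹` the triangle is isomorphic — via `f₂` on `Y`,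
the identity on `X ⊞ Y` and `g₁⁻¹` on `X` — to `Y ⟶(θ,1)ᵀ⟶ X ⊞ Y ⟶(1,−θ)⟶ X ⟶0⟶ Y⟦1⟧`. -/
theorem statement_16 {C : Type u} [Category.{v} C] [Preadditive C] [CategoryTheory.Linear ℂ C]
    [HasZeroObject C] [HasShift C ℤ] [∀ n : ℤ, (shiftFunctor C n).Additive] [Pretriangulated C]
    [HasBinaryBiproducts C]
    {X Y : C} (hX : IsLocalRing (End X)) (hY : IsLocalRing (End Y)) (hne : IsEmpty (X ≅ Y))
    (f : Y ⟶ X ⊞ Y) (g : X ⊞ Y ⟶ X)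
    (hT : Triangle.mk f g (0 : X ⟶ (Y⟦(1 : ℤ)⟧)) ∈ distTriang C) :
    IsIso (f ≫ biprod.snd) ∧ IsIso (biprod.inl ≫ g) ∧
    (f ≫ biprod.fst) ≫ biprod.inl ≫ g + (f ≫ biprod.snd) ≫ biprod.inr ≫ g = 0 ∧
    ∃ θ : Y ⟶ X, (f ≫ biprod.snd) ≫ θ = f ≫ biprod.fst ∧
      ∃ e : Triangle.mk f g (0 : X ⟶ (Y⟦(1 : ℤ)⟧)) ≅
            Triangle.mk (biprod.lift θ (𝟙 Y)) (biprod.desc (𝟙 X) (-θ))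
              (0 : X ⟶ (Y⟦(1 : ℤ)⟧)),
        e.hom.hom₁ = f ≫ biprod.snd ∧ e.hom.hom₂ = 𝟙 (X ⊞ Y) ∧
        (biprod.inl ≫ g) ≫ e.hom.hom₃ = 𝟙 X := by
  have hfg : f ≫ g = 0 := comp_distTriang_mor_zero₁₂ _ hT
  have : Mono f := Triangle.mono₁ _ hT rfl
  have : Epi g := Triangle.epi₂ _ hT rfl
  have := isSplitMono_of_mono f
  have := isSplitEpi_of_epi g
  have hf₂ := isIso_comp_snd_of_isSplitMono hne f
  have hg₁ := isIso_inl_comp_of_isSplitEpi hne g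
  -- `hf₂` is passed explicitly: elaborated against `(Triangle.mk f g 0).obj₁`, the instance
  -- problem `IsIso (f ≫ biprod.snd)` is not found up to reducible unfolding.
  refine ⟨hf₂, hg₁, (biprod.comp_eq_add f g).symm.trans hfg, _, IsIso.hom_inv_id_assoc _ _,
    Triangle.isoMk _ _ (@asIso _ _ _ _ _ hf₂) (Iso.refl _) (asIso (biprod.inl ≫ g)).symm ?_ ?_
      (zero_comp.trans comp_zero.symm), rfl, rfl, IsIso.hom_inv_id _⟩
  · exact (Category.comp_id f).trans (biprod.eq_comp_lift_of_isIso_comp_snd f)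
  · exact (biprod.comp_inv_eq_desc_of_comp_eq_zero f g hfg).trans (Category.id_comp _).symm
end
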